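/- Let f : K → ℝᵏ be an mdm function with gradient flow Π_f, a ≺ b in ℝᵏ, and I the set of critical simplices σ with f(σ) ∈ Q_a^b. Define A = {σ ∈ K(b) \ K(a) : σ does not connect to I under Π_f} and B = {σ ∈ K(b) \ M(I) : σ connects to I}. Then K(b) \ K(a) = A ∪ M(I) ∪ B, where A, M(I), B are mutually disjoint, and both K(a) ∪ A and K(a) ∪ A ∪ M(I) are subcomplexes of K(b). -/

import Mathlib

open Finset

variable {α : Type*} [DecidableEq α]

/-- `K` is a finite simplicial complex: a finite collection of nonempty finite sets
closed under taking nonempty subsets. -/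
def IsComplex (K : Finset (Finset α)) : Prop :=
  ∀ σ ∈ K, σ.Nonempty ∧ ∀ τ ⊆ σ, τ.Nonempty → τ ∈ K

/-- `V` is a discrete vector field on `K`. -/
def IsDVF (K : Finset (Finset α)) (V : Finset α → Option (Finset α)) : Prop :=
  (∀ σ τ, V σ = some τ → σ ∈ K ∧ τ ∈ K ∧ (τ = σ ∨ (σ ⊆ τ ∧ τ.card = σ.card + 1))) ∧
  (∀ σ σ' τ, V σ = some τ → V σ' = some τ → σ = σ') ∧
  (∀ σ ∈ K, (V σ).isSome = true ∨ ∃ τ, V τ = some σ) ∧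
  (∀ σ, (V σ).isSome = true → (∃ τ, V τ = some σ) → V σ = some σ) ∧
  (∀ σ, σ ∉ K → V σ = none)

/-- The flow `Π_V` associated to a discrete vector field `V`. -/
def flow (V : Finset α → Option (Finset α)) (σ : Finset α) : Set (Finset α) :=
  match V σ with
  | some β => if β = σ then {τ | τ.Nonempty ∧ τ ⊆ σ} else {β}
  | none => {τ | τ.Nonempty ∧ τ ⊆ σ ∧ τ ≠ σ ∧ V τ ≠ some σ}

/-- `σ →_V τ`: there is a nontrivial solution of the flow `Π_V` from `σ` to `τ`. -/
def Connects (V : Finset α → Option (Finset α)) (σ τ : Finset α) : Prop :=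
  ∃ (n : ℕ) (ρ : ℕ → Finset α), 1 ≤ n ∧ ρ 0 = σ ∧ ρ n = τ ∧
    ∀ i < n, ρ (i + 1) ∈ flow V (ρ i)

/-- `H_f(σ)`: the cofacets `β ⊃ σ` with `f β ≼ f σ`. -/
def Hset {β : Type*} [Preorder β] (K : Finset (Finset α)) (f : Finset α → β)
    (σ : Finset α) : Set (Finset α) :=
  {τ | τ ∈ K ∧ σ ⊆ τ ∧ τ.card = σ.card + 1 ∧ f τ ≤ f σ}

/-- `T_f(σ)`: the facets `α ⊂ σ` with `f α ≽ f σ`. -/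
def Tset {β : Type*} [Preorder β] (K : Finset (Finset α)) (f : Finset α → β)
    (σ : Finset α) : Set (Finset α) :=
  {τ | τ ∈ K ∧ τ ⊆ σ ∧ σ.card = τ.card + 1 ∧ f σ ≤ f τ}

/-- `f` is a multidimensional discrete Morse function: `|H_f(σ)| ≤ 1`, `|T_f(σ)| ≤ 1`,
cofacets outside `H_f(σ)` have strictly larger value, and facets outside `T_f(σ)`
have strictly smaller value (in the partial order of the codomain). -/
def IsMdm {β : Type*} [Preorder β] (K : Finset (Finset α)) (f : Finset α → β) : Prop :=
  ∀ σ ∈ K,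
    (Hset K f σ).Subsingleton ∧ (Tset K f σ).Subsingleton ∧
    (∀ τ ∈ K, σ ⊆ τ → τ.card = σ.card + 1 → τ ∉ Hset K f σ → f σ ≤ f τ ∧ f σ ≠ f τ) ∧
    (∀ τ ∈ K, τ ⊆ σ → σ.card = τ.card + 1 → τ ∉ Tset K f σ → f τ ≤ f σ ∧ f τ ≠ f σ)

/-- `V` is the gradient vector field of `f`: `dom V = {σ : T_f(σ) = ∅}`, with
`V σ = σ` if `H_f(σ) = ∅` and `V σ = β` if `H_f(σ) = {β}`. -/
def IsGrad {β : Type*} [Preorder β] (K : Finset (Finset α)) (f : Finset α → β)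
    (V : Finset α → Option (Finset α)) : Prop :=
  (∀ σ, σ ∉ K → V σ = none) ∧
  ∀ σ ∈ K,
    (Tset K f σ ≠ ∅ → V σ = none) ∧
    (Tset K f σ = ∅ →
      (Hset K f σ = ∅ → V σ = some σ) ∧ ∀ τ, Hset K f σ = {τ} → V σ = some τ)

/-- `σ` is a critical simplex of `f`. -/
def IsCritical {β : Type*} [Preorder β] (K : Finset (Finset α)) (f : Finset α → β)
    (σ : Finset α) : Prop :=
  Hset K f σ = ∅ ∧ Tset K f σ = ∅

open Classical in
/-- The sublevel complex `K(a)`. -/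
noncomputable def sublevel {k : ℕ} (K : Finset (Finset α)) (f : Finset α → Fin k → ℝ)
    (a : Fin k → ℝ) : Finset (Finset α) :=
  K.filter fun σ => ∃ τ ∈ K, σ ⊆ τ ∧ f τ ≤ a

set_option linter.unusedSectionVars false
section Aux

variable {k : ℕ} {K : Finset (Finset α)} {f : Finset α → Fin k → ℝ}
    {V : Finset α → Option (Finset α)}

lemma mem_sublevel {a : Fin k → ℝ} {σ : Finset α} :
    σ ∈ sublevel K f a ↔ σ ∈ K ∧ ∃ τ ∈ K, σ ⊆ τ ∧ f τ ≤ a := by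
  classical
  simp [sublevel]

lemma face_mem (hK : IsComplex K) {σ τ : Finset α} (hσ : σ ∈ K) (h : τ ⊆ σ)
    (hne : τ.Nonempty) : τ ∈ K := (hK σ hσ).2 τ h hne

lemma face_sublevel (hK : IsComplex K) {a : Fin k → ℝ} {σ τ : Finset α}
    (hσ : σ ∈ sublevel K f a) (h : τ ⊆ σ) (hne : τ.Nonempty) : τ ∈ sublevel K f a := by
  rw [mem_sublevel] at hσ ⊢
  obtain ⟨hσK, ρ, hρK, hsub, hle⟩ := hσ
  exact ⟨face_mem hK hσK h hne, ρ, hρK, h.trans hsub, hle⟩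

lemma flow_none {σ : Finset α} (h : V σ = none) :
    flow V σ = {τ | τ.Nonempty ∧ τ ⊆ σ ∧ τ ≠ σ ∧ V τ ≠ some σ} := by
  unfold flow; rw [h]

lemma flow_self {σ : Finset α} (h : V σ = some σ) :
    flow V σ = {τ | τ.Nonempty ∧ τ ⊆ σ} := by
  unfold flow; rw [h]; simp

lemma flow_some {σ β : Finset α} (h : V σ = some β) (hne : β ≠ σ) :
    flow V σ = {β} := by
  unfold flow; rw [h]; simp [hne]

lemma val_mono (hK : IsComplex K) (hf : IsMdm K f) :
    ∀ (n : ℕ) (ρ : Finset α), ρ ∈ K → ∀ σ ∈ K, σ ⊆ ρ → ρ.card = σ.card + n →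
      (∃ γ ∈ Hset K f σ, γ ⊆ ρ) ∨ (f σ ≤ f ρ ∧ (σ ≠ ρ → f σ ≠ f ρ)) := by
  intro n
  induction n with
  | zero =>
    intro ρ hρ σ hσ hsub hcard
    have : σ = ρ := Finset.eq_of_subset_of_card_le hsub (by omega)
    subst this
    exact Or.inr ⟨le_rfl, fun h => absurd rfl h⟩
  | succ n ih =>
    intro ρ hρ σ hσ hsub hcard
    by_cases hH : ∃ γ ∈ Hset K f σ, γ ⊆ ρ
    · exact Or.inl hH
    right
    rcases Nat.eq_zero_or_pos n with hn0 | hn1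
    · subst hn0
      have hnH : ρ ∉ Hset K f σ := fun hm => hH ⟨ρ, hm, subset_rfl⟩
      obtain ⟨h1, h2⟩ := (hf σ hσ).2.2.1 ρ hρ hsub (by omega) hnH
      exact ⟨h1, fun _ => h2⟩
    · have hcard2 : 1 < (ρ \ σ).card := by
        rw [card_sdiff_of_subset hsub]; omega
      obtain ⟨x, hx, y, hy, hxy⟩ := Finset.one_lt_card.mp hcard2
      have key : ∀ z ∈ ρ \ σ, ρ.erase z ∉ Tset K f ρ → f σ ≤ f ρ ∧ f σ ≠ f ρ := by
        intro z hz hzT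
        have hz' := Finset.mem_sdiff.mp hz
        have hsub' : σ ⊆ ρ.erase z := Finset.subset_erase.mpr ⟨hsub, hz'.2⟩
        have hσne : σ.Nonempty := (hK σ hσ).1
        have hρ'K : ρ.erase z ∈ K :=
          (hK ρ hρ).2 (ρ.erase z) (Finset.erase_subset _ _) (hσne.mono hsub')
        have hcard' : (ρ.erase z).card = σ.card + n := by
          rw [Finset.card_erase_of_mem hz'.1]; omega
        have hcard'' : ρ.card = (ρ.erase z).card + 1 := by
          rw [Finset.card_erase_of_mem hz'.1]
          have := Finset.card_le_card hsub
          omega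
        rcases ih (ρ.erase z) hρ'K σ hσ hsub' hcard' with ⟨γ, hγ, hγρ⟩ | hmono
        · exact absurd ⟨γ, hγ, hγρ.trans (Finset.erase_subset _ _)⟩ hH
        · have hfac := (hf ρ hρ).2.2.2 (ρ.erase z) hρ'K (Finset.erase_subset _ _) hcard'' hzT
          refine ⟨hmono.1.trans hfac.1, fun heq => ?_⟩
          exact hfac.2 (le_antisymm hfac.1 (heq ▸ hmono.1))
      have hfin : f σ ≤ f ρ ∧ f σ ≠ f ρ := by
        by_cases hT1 : ρ.erase x ∉ Tset K f ρ
        · exact key x hx hT1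
        · refine key y hy (fun hT2 => ?_)
          rw [not_not] at hT1
          have heq : ρ.erase x = ρ.erase y := (hf ρ hρ).2.1 hT1 hT2
          have hx' := (Finset.mem_sdiff.mp hx).1
          have hmem : x ∈ ρ.erase x := by
            rw [heq]; exact Finset.mem_erase.mpr ⟨hxy, hx'⟩
          exact Finset.notMem_erase x ρ hmem
      exact ⟨hfin.1, fun _ => hfin.2⟩

lemma crit_sublevel (hK : IsComplex K) (hf : IsMdm K f) {a : Fin k → ℝ} {σ : Finset α}
    (hσ : σ ∈ sublevel K f a) (hH : Hset K f σ = ∅) : f σ ≤ a := by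
  obtain ⟨hσK, ρ, hρK, hsub, hle⟩ := mem_sublevel.mp hσ
  have hcard : ρ.card = σ.card + (ρ.card - σ.card) := by
    have := Finset.card_le_card hsub; omega
  rcases val_mono hK hf _ ρ hρK σ hσK hsub hcard with ⟨γ, hγ, _⟩ | hmono
  · rw [hH] at hγ; exact absurd hγ (Set.notMem_empty _)
  · exact hmono.1.trans hle

lemma grad_K (hV : IsGrad K f V) {σ β : Finset α} (h : V σ = some β) : σ ∈ K := by
  by_contra hσ
  rw [hV.1 σ hσ] at h
  exact nomatch h

lemma grad_tset (hV : IsGrad K f V) {σ β : Finset α} (h : V σ = some β) :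
    Tset K f σ = ∅ := by
  have hσ := grad_K hV h
  by_contra hT
  rw [(hV.2 σ hσ).1 hT] at h
  exact nomatch h

lemma grad_some_ne (hf : IsMdm K f) (hV : IsGrad K f V) {σ β : Finset α}
    (h : V σ = some β) (hne : β ≠ σ) : Hset K f σ = {β} ∧ Tset K f σ = ∅ := by
  have hσ := grad_K hV h
  have hT := grad_tset hV h
  rcases ((hf σ hσ).1).eq_empty_or_singleton with hH | ⟨γ, hH⟩
  · rw [((hV.2 σ hσ).2 hT).1 hH] at h
    exact absurd (Option.some.inj h).symm hne
  · have h2 := ((hV.2 σ hσ).2 hT).2 γ hH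
    rw [h2] at h
    exact ⟨by rw [← Option.some.inj h]; exact hH, hT⟩

lemma grad_self_crit (hf : IsMdm K f) (hV : IsGrad K f V) {σ : Finset α}
    (h : V σ = some σ) : IsCritical K f σ := by
  have hσ := grad_K hV h
  have hT := grad_tset hV h
  rcases ((hf σ hσ).1).eq_empty_or_singleton with hH | ⟨γ, hH⟩
  · exact ⟨hH, hT⟩
  · exfalso
    have h2 := ((hV.2 σ hσ).2 hT).2 γ hH
    rw [h2] at h
    have hγσ : γ = σ := Option.some.inj h
    have hm : γ ∈ Hset K f σ := by rw [hH]; rfl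
    have := hm.2.2.1
    rw [hγσ] at this
    omega

lemma crit_grad (hV : IsGrad K f V) {σ : Finset α} (hσ : σ ∈ K)
    (hc : IsCritical K f σ) : V σ = some σ := ((hV.2 σ hσ).2 hc.2).1 hc.1

lemma grad_flow_none (hf : IsMdm K f) (hV : IsGrad K f V) {σ β : Finset α}
    (h : V σ = some β) (hne : β ≠ σ) : V β = none := by
  have hH := (grad_some_ne hf hV h hne).1
  have hβm : β ∈ Hset K f σ := by rw [hH]; rfl
  have hσK := grad_K hV h
  have hσT : σ ∈ Tset K f β := ⟨hσK, hβm.2.1, hβm.2.2.1, hβm.2.2.2⟩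
  exact (hV.2 β hβm.1).1 (fun hE => by rw [hE] at hσT; exact hσT)

lemma grad_inj (hf : IsMdm K f) (hV : IsGrad K f V) {σ σ' β : Finset α}
    (h : V σ = some β) (h' : V σ' = some β) : σ = σ' := by
  by_contra hne
  by_cases h1 : β = σ
  · have := grad_flow_none hf hV h' (fun hh => hne (h1.symm.trans hh))
    rw [h1, h] at this
    exact nomatch this
  · by_cases h2 : β = σ'
    · have := grad_flow_none hf hV h (fun hh => hne (h2.symm.trans hh).symm)
      rw [h2, h'] at this
      exact nomatch this
    · have hm : β ∈ Hset K f σ := by rw [(grad_some_ne hf hV h h1).1]; rfl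
      have hm' : β ∈ Hset K f σ' := by rw [(grad_some_ne hf hV h' h2).1]; rfl
      have hβK : β ∈ K := hm.1
      have hσT : σ ∈ Tset K f β := ⟨grad_K hV h, hm.2.1, hm.2.2.1, hm.2.2.2⟩
      have hσ'T : σ' ∈ Tset K f β := ⟨grad_K hV h', hm'.2.1, hm'.2.2.1, hm'.2.2.2⟩
      exact hne ((hf β hβK).2.1 hσT hσ'T)


lemma connects_step {σ τ : Finset α} (h : τ ∈ flow V σ) : Connects V σ τ := by
  refine ⟨1, fun i => if i = 0 then σ else τ, le_rfl, by simp, by simp, ?_⟩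
  intro i hi
  have hi0 : i = 0 := by omega
  subst hi0
  simpa using h

lemma connects_trans {σ τ ω : Finset α} (h1 : Connects V σ τ) (h2 : Connects V τ ω) :
    Connects V σ ω := by
  obtain ⟨n, ρ, hn, h0, hnd, hstep⟩ := h1
  obtain ⟨m, ρ', hm, h0', hmd, hstep'⟩ := h2
  refine ⟨n + m, fun i => if i < n then ρ i else ρ' (i - n), by omega, ?_, ?_, ?_⟩
  · simp only [if_pos (by omega : (0:ℕ) < n)]; exact h0
  · simp only [if_neg (by omega : ¬ n + m < n)]
    rw [show n + m - n = m by omega]; exact hmd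
  · intro i hi
    by_cases hc1 : i + 1 < n
    · simp only [if_pos hc1, if_pos (by omega : i < n)]
      exact hstep i (by omega)
    · by_cases hc2 : i < n
      · have hin : i + 1 = n := by omega
        simp only [if_neg hc1, if_pos hc2]
        rw [show i + 1 - n = 0 by omega, h0', ← hnd, ← hin]
        exact hstep i (by omega)
      · simp only [if_neg hc1, if_neg hc2]
        rw [show i + 1 - n = (i - n) + 1 by omega]
        exact hstep' (i - n) (by omega)

lemma connects_cons {σ τ ω : Finset α} (h1 : τ ∈ flow V σ) (h2 : Connects V τ ω) :
    Connects V σ ω := connects_trans (connects_step h1) h2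

lemma connects_snoc {σ τ ω : Finset α} (h1 : Connects V σ τ) (h2 : ω ∈ flow V τ) :
    Connects V σ ω := connects_trans h1 (connects_step h2)

lemma connects_pred {σ m : Finset α} {n : ℕ} {ρ : ℕ → Finset α} (hn : 1 ≤ n)
    (h0 : ρ 0 = σ) (hstep : ∀ i < n, ρ (i + 1) ∈ flow V (ρ i))
    (hm : m ∈ flow V (ρ (n - 1))) : Connects V σ m := by
  rcases eq_or_lt_of_le hn with h1 | h1
  · apply connects_step
    rwa [show n - 1 = 0 by omega, h0] at hm
  · exact connects_snoc ⟨n - 1, ρ, by omega, h0, rfl, fun i hi => hstep i (by omega)⟩ hm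

lemma crit_connects_self (hK : IsComplex K) (hV : IsGrad K f V) {σ : Finset α}
    (hσ : σ ∈ K) (hc : IsCritical K f σ) : Connects V σ σ :=
  connects_step (by rw [flow_self (crit_grad hV hσ hc)]; exact ⟨(hK σ hσ).1, subset_rfl⟩)

lemma flow_sublevel (hK : IsComplex K) (hf : IsMdm K f) (hV : IsGrad K f V)
    {a : Fin k → ℝ} {σ τ : Finset α}
    (hσ : σ ∈ sublevel K f a) (hτ : τ ∈ flow V σ) : τ ∈ sublevel K f a := by
  have hσK : σ ∈ K := (mem_sublevel.mp hσ).1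
  cases hVσ : V σ with
  | none =>
    rw [flow_none hVσ] at hτ
    exact face_sublevel hK hσ hτ.2.1 hτ.1
  | some β =>
    by_cases hβ : β = σ
    · rw [hβ] at hVσ; rw [flow_self hVσ] at hτ
      exact face_sublevel hK hσ hτ.2 hτ.1
    · rw [flow_some hVσ hβ] at hτ
      have hτβ : τ = β := hτ
      subst hτβ
      have hH := (grad_some_ne hf hV hVσ hβ).1
      have hm : τ ∈ Hset K f σ := by rw [hH]; rfl
      obtain ⟨hσK', ρ, hρK, hsub, hle⟩ := mem_sublevel.mp hσ
      have hcard : ρ.card = σ.card + (ρ.card - σ.card) := by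
        have := Finset.card_le_card hsub; omega
      rcases val_mono hK hf _ ρ hρK σ hσK hsub hcard with ⟨γ, hγ, hγρ⟩ | hmono
      · rw [hH] at hγ
        have hγτ : γ = τ := hγ
        subst hγτ
        exact mem_sublevel.mpr ⟨hm.1, ρ, hρK, hγρ, hle⟩
      · exact mem_sublevel.mpr ⟨hm.1, τ, hm.1, subset_rfl,
          hm.2.2.2.trans (hmono.1.trans hle)⟩

lemma connects_sublevel (hK : IsComplex K) (hf : IsMdm K f) (hV : IsGrad K f V)
    {a : Fin k → ℝ} {σ τ : Finset α} (h : Connects V σ τ)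
    (hσ : σ ∈ sublevel K f a) : τ ∈ sublevel K f a := by
  obtain ⟨n, ρ, hn, h0, hnd, hstep⟩ := h
  have key : ∀ i ≤ n, ρ i ∈ sublevel K f a := by
    intro i
    induction i with
    | zero => intro _; rwa [h0]
    | succ j ihj =>
      intro hj
      exact flow_sublevel hK hf hV (ihj (by omega)) (hstep j (by omega))
  rw [← hnd]; exact key n le_rfl

lemma step_down (hK : IsComplex K) (hf : IsMdm K f) (hV : IsGrad K f V)
    {σ τ : Finset α} (hσ : σ ∈ K) (hsub : τ ⊆ σ) (hne : τ.Nonempty)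
    (hts : τ ≠ σ) (hVτ : V τ ≠ some σ) : Connects V σ τ := by
  cases hVσ : V σ with
  | none =>
    exact connects_step (by rw [flow_none hVσ]; exact ⟨hne, hsub, hts, hVτ⟩)
  | some β =>
    by_cases hβ : β = σ
    · rw [hβ] at hVσ
      exact connects_step (by rw [flow_self hVσ]; exact ⟨hne, hsub⟩)
    · have hβH : β ∈ Hset K f σ := by rw [(grad_some_ne hf hV hVσ hβ).1]; rfl
      have hVβ : V β = none := grad_flow_none hf hV hVσ hβ
      have hstep1 : β ∈ flow V σ := by rw [flow_some hVσ hβ]; rfl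
      have hstep2 : τ ∈ flow V β := by
        rw [flow_none hVβ]
        refine ⟨hne, hsub.trans hβH.2.1, ?_, ?_⟩
        · intro hh
          have hc1 := Finset.card_le_card hsub
          have hc2 := hβH.2.2.1
          rw [hh] at hc1
          omega
        · intro hh
          exact hts (grad_inj hf hV hh hVσ)
      exact connects_cons hstep1 (connects_step hstep2)

lemma descend (hK : IsComplex K) (hf : IsMdm K f) (hV : IsGrad K f V)
    {σ τ γ : Finset α} (hσ : σ ∈ K) (hsub : τ ⊆ σ) (hne : τ.Nonempty)
    (hγK : γ ∈ K) (hγ : IsCritical K f γ) (h : Connects V τ γ) : Connects V σ γ := by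
  by_cases hts : τ = σ
  · rwa [hts] at h
  by_cases hVτ : V τ = some σ
  · have hVσ : V σ = none := grad_flow_none hf hV hVτ (Ne.symm hts)
    obtain ⟨n, ρ, hn, h0, hnd, hstep⟩ := h
    have hρ1 : ρ 1 = σ := by
      have h1 := hstep 0 (by omega)
      rw [h0, flow_some hVτ (Ne.symm hts)] at h1
      exact h1
    rcases eq_or_lt_of_le hn with h1 | h1
    · exfalso
      have hγσ : γ = σ := by rw [← hnd, ← h1, hρ1]
      have hcg := crit_grad hV hγK hγ
      rw [hγσ, hVσ] at hcg
      exact nomatch hcg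
    · refine ⟨n - 1, fun i => ρ (i + 1), by omega, hρ1, ?_, ?_⟩
      · show ρ (n - 1 + 1) = γ
        rw [show n - 1 + 1 = n by omega]; exact hnd
      · intro i hi
        exact hstep (i + 1) (by omega)
  · exact connects_trans (step_down hK hf hV hσ hsub hne hts hVτ) h

lemma ascend (hK : IsComplex K) (hf : IsMdm K f) (hV : IsGrad K f V)
    {τ'' σ τ : Finset α} (hτ''K : τ'' ∈ K) (hc : IsCritical K f τ'')
    (h : Connects V τ'' σ) (hVτ : V τ = some σ) (hne : τ.Nonempty) (hts : τ ≠ σ) :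
    Connects V τ'' τ := by
  have hσH : σ ∈ Hset K f τ := by
    rw [(grad_some_ne hf hV hVτ (Ne.symm hts)).1]; rfl
  have hτσ : τ ⊆ σ := hσH.2.1
  have hVσ : V σ = none := grad_flow_none hf hV hVτ (Ne.symm hts)
  obtain ⟨n, ρ, hn, h0, hnd, hstep⟩ := h
  have hlast : σ ∈ flow V (ρ (n - 1)) := by
    have h1 := hstep (n - 1) (by omega)
    rwa [show n - 1 + 1 = n by omega, hnd] at h1
  cases hVω : V (ρ (n - 1)) with
  | none =>
    rw [flow_none hVω] at hlast
    obtain ⟨hσne, hσω, hσneω, hVσω⟩ := hlast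
    refine connects_pred hn h0 hstep ?_
    rw [flow_none hVω]
    refine ⟨hne, hτσ.trans hσω, ?_, ?_⟩
    · intro hh
      rw [← hh, hVτ] at hVω
      exact nomatch hVω
    · rw [hVτ]
      intro hh
      exact hσneω (Option.some.inj hh)
  | some β =>
    by_cases hβ : β = ρ (n - 1)
    · rw [hβ] at hVω
      have hσω : σ ⊆ ρ (n - 1) := by
        rw [flow_self hVω] at hlast; exact hlast.2
      refine connects_pred hn h0 hstep ?_
      rw [flow_self hVω]
      exact ⟨hne, hτσ.trans hσω⟩
    · rw [flow_some hVω hβ] at hlast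
      have hσβ : σ = β := hlast
      rw [← hσβ] at hVω
      have hωτ : ρ (n - 1) = τ := grad_inj hf hV hVω hVτ
      rcases eq_or_lt_of_le hn with h1 | h1
      · have hττ : τ'' = τ := by rw [← h0, show (0:ℕ) = n - 1 by omega, hωτ]
        rw [← hττ]
        exact crit_connects_self hK hV hτ''K hc
      · exact ⟨n - 1, ρ, by omega, h0, hωτ, fun i hi => hstep i (by omega)⟩

end Aux

/-- Decomposition `K(b) \ K(a) = A ∪ M(I) ∪ B` into mutually disjoint pieces, with
`K(a) ∪ A` and `K(a) ∪ A ∪ M(I)` subcomplexes of `K(b)`. Here `I` is the set of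
critical simplices with value in `Q_a^b`, `M(I) = ⋃_{τ,τ'∈I} C(τ',τ)` the Morse set,
`A` the part of `K(b) \ K(a)` not connecting to `I`, and `B` the part of
`K(b) \ M(I)` connecting to `I`. -/
theorem stmt15 {k : ℕ} (K : Finset (Finset α)) (f : Finset α → Fin k → ℝ)
    (V : Finset α → Option (Finset α)) (hK : IsComplex K)
    (hf : IsMdm K f) (hV : IsGrad K f V) (a b : Fin k → ℝ)
    (hab : a ≤ b) (hne : a ≠ b) :
    let I : Set (Finset α) := {σ | σ ∈ K ∧ IsCritical K f σ ∧ f σ ≤ b ∧ ¬ f σ ≤ a}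
    let M : Set (Finset α) :=
      {σ | (∃ τ' ∈ I, ∃ τ ∈ I, Connects V τ' σ ∧ Connects V σ τ) ∨ σ ∈ I}
    let A : Set (Finset α) :=
      {σ | σ ∈ sublevel K f b ∧ σ ∉ sublevel K f a ∧ ¬ ∃ τ ∈ I, Connects V σ τ}
    let B : Set (Finset α) :=
      {σ | σ ∈ sublevel K f b ∧ σ ∉ M ∧ ∃ τ ∈ I, Connects V σ τ}
    ({σ : Finset α | σ ∈ sublevel K f b ∧ σ ∉ sublevel K f a} = A ∪ M ∪ B) ∧
    Disjoint A M ∧ Disjoint A B ∧ Disjoint M B ∧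
    (∀ σ : Finset α, (σ ∈ sublevel K f a ∨ σ ∈ A) →
      ∀ τ, τ ⊆ σ → τ.Nonempty → (τ ∈ sublevel K f a ∨ τ ∈ A)) ∧
    (∀ σ : Finset α, (σ ∈ sublevel K f a ∨ σ ∈ A ∨ σ ∈ M) →
      ∀ τ, τ ⊆ σ → τ.Nonempty → (τ ∈ sublevel K f a ∨ τ ∈ A ∨ τ ∈ M)) := by
  intro I M A B
  have hIb : ∀ γ ∈ I, γ ∈ sublevel K f b := fun γ hγ =>
    mem_sublevel.mpr ⟨hγ.1, γ, hγ.1, subset_rfl, hγ.2.2.1⟩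
  have hIa : ∀ γ ∈ I, γ ∉ sublevel K f a := fun γ hγ hmem =>
    hγ.2.2.2 (crit_sublevel hK hf hmem hγ.2.1.1)
  have hConnI : ∀ σ, σ ∈ sublevel K f a → ∀ γ ∈ I, ¬ Connects V σ γ :=
    fun σ hσ γ hγ hc => hIa γ hγ (connects_sublevel hK hf hV hc hσ)
  have hMb : ∀ σ ∈ M, σ ∈ sublevel K f b := by
    intro σ hσ
    rcases hσ with ⟨τ', hτ', τ, hτ, h1, h2⟩ | hσI
    · exact connects_sublevel hK hf hV h1 (hIb τ' hτ')
    · exact hIb σ hσI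
  have hMa : ∀ σ ∈ M, σ ∉ sublevel K f a := by
    intro σ hσ hmem
    rcases hσ with ⟨τ', hτ', τ, hτ, h1, h2⟩ | hσI
    · exact hConnI σ hmem τ hτ h2
    · exact hIa σ hσI hmem
  have hMconn : ∀ σ ∈ M, ∃ γ ∈ I, Connects V σ γ := by
    intro σ hσ
    rcases hσ with ⟨τ', hτ', τ, hτ, h1, h2⟩ | hσI
    · exact ⟨τ, hτ, h2⟩
    · exact ⟨σ, hσI, crit_connects_self hK hV hσI.1 hσI.2.1⟩
  refine ⟨?_, ?_, ?_, ?_, ?_, ?_⟩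
  · ext σ
    simp only [Set.mem_setOf_eq, Set.mem_union]
    constructor
    · rintro ⟨hb, ha⟩
      by_cases hc : ∃ γ ∈ I, Connects V σ γ
      · by_cases hm : σ ∈ M
        · exact Or.inl (Or.inr hm)
        · exact Or.inr ⟨hb, hm, hc⟩
      · exact Or.inl (Or.inl ⟨hb, ha, hc⟩)
    · rintro ((hA | hM) | hB)
      · exact ⟨hA.1, hA.2.1⟩
      · exact ⟨hMb σ hM, hMa σ hM⟩
      · obtain ⟨hb, _, γ, hγ, hc⟩ := hB
        exact ⟨hb, fun ha => hConnI σ ha γ hγ hc⟩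
  · rw [Set.disjoint_left]
    intro σ hA hM
    exact hA.2.2 (hMconn σ hM)
  · rw [Set.disjoint_left]
    intro σ hA hB
    exact hA.2.2 hB.2.2
  · rw [Set.disjoint_left]
    intro σ hM hB
    exact hB.2.1 hM
  · intro σ hσ τ hsub hτne
    rcases hσ with ha | hA
    · exact Or.inl (face_sublevel hK ha hsub hτne)
    · by_cases hτa : τ ∈ sublevel K f a
      · exact Or.inl hτa
      · right
        refine ⟨face_sublevel hK hA.1 hsub hτne, hτa, ?_⟩
        rintro ⟨γ, hγ, hc⟩
        exact hA.2.2 ⟨γ, hγ,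
          descend hK hf hV (mem_sublevel.mp hA.1).1 hsub hτne hγ.1 hγ.2.1 hc⟩
  · intro σ hσ τ hsub hτne
    rcases hσ with ha | hA | hM
    · exact Or.inl (face_sublevel hK ha hsub hτne)
    · by_cases hτa : τ ∈ sublevel K f a
      · exact Or.inl hτa
      · by_cases hc : ∃ γ ∈ I, Connects V τ γ
        · obtain ⟨γ, hγ, hcc⟩ := hc
          exact absurd ⟨γ, hγ,
            descend hK hf hV (mem_sublevel.mp hA.1).1 hsub hτne hγ.1 hγ.2.1 hcc⟩ hA.2.2
        · exact Or.inr (Or.inl ⟨face_sublevel hK hA.1 hsub hτne, hτa, hc⟩)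
    · by_cases hτa : τ ∈ sublevel K f a
      · exact Or.inl hτa
      by_cases hc : ∃ γ ∈ I, Connects V τ γ
      · right; right
        obtain ⟨γ, hγ, hcγ⟩ := hc
        by_cases hτσ : τ = σ
        · rw [hτσ]; exact hM
        have hσK : σ ∈ K := (mem_sublevel.mp (hMb σ hM)).1
        rcases hM with ⟨τ'', hτ'', τend, hτend, h1, h2⟩ | hσI
        · left
          refine ⟨τ'', hτ'', γ, hγ, ?_, hcγ⟩
          by_cases hVτ : V τ = some σ
          · exact ascend hK hf hV hτ''.1 hτ''.2.1 h1 hVτ hτne hτσ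
          · exact connects_trans h1 (step_down hK hf hV hσK hsub hτne hτσ hVτ)
        · left
          refine ⟨σ, hσI, γ, hγ, ?_, hcγ⟩
          apply connects_step
          rw [flow_self (crit_grad hV hσI.1 hσI.2.1)]
          exact ⟨hτne, hsub⟩
      · exact Or.inr (Or.inl ⟨face_sublevel hK (hMb σ hM) hsub hτne, hτa, hc⟩)
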